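/- arXiv:1605.08434 — 5 statements merged into one kernel-verified Lean document; each statement's English description precedes it below -/
import Mathlib

section
/- Let ν_k : C → P denote the function with ν_k(ι) = (k, 0, 0, …) and ν_k(ρ) = 0 for ρ ≠ ι. Fix m ≥ 0 and a function λ : C → P with ‖λ‖ finite, writing λ(ι) = (λ_1, λ_2,…). If for some n ≥ m there exists a zigzag path from ν_{n−m} to λ[n], then n − ‖λ‖ ≥ n − 2m and λ_1 ≤ m; in particular 3m − ‖λ‖ ≥ λ_1, so λ[3m] is well-defined. -/
/-- A partition: a non-increasing sequence of naturals with only finitely many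
nonzero terms.  (`f i` is the `(i+1)`-st part.) -/
def IsPartition (f : ℕ → ℕ) : Prop := Antitone f ∧ ∃ N, ∀ i, N ≤ i → f i = 0

/-- `|λ|`: the sum of the parts of a partition. -/
noncomputable def psize (f : ℕ → ℕ) : ℕ := ∑ᶠ i, f i

/-- `λ ⟶⁺ μ`: `μ` is obtained from `λ` by adding at most one box to each row. -/
def StepUp (a b : ℕ → ℕ) : Prop := ∀ i, a i ≤ b i ∧ b i ≤ a i + 1

/-- `μ ⟶⁻ λ`: `λ` is obtained from `μ` by removing at most one box from each row. -/
def StepDown (b a : ℕ → ℕ) : Prop := ∀ i, b i - 1 ≤ a i ∧ a i ≤ b i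

/-- `h̄`: add one box to the first row. -/
def hbar (f : ℕ → ℕ) : ℕ → ℕ := fun i => if i = 0 then f 0 + 1 else f i

variable {C : Type*}

/-- Pointwise `⟶⁺` for functions `C → P`. -/
def FStepUp (a b : C → ℕ → ℕ) : Prop := ∀ ρ, StepUp (a ρ) (b ρ)

/-- Pointwise `⟶⁻` for functions `C → P`. -/
def FStepDown (b a : C → ℕ → ℕ) : Prop := ∀ ρ, StepDown (b ρ) (a ρ)

/-- `‖μ‖ = ∑_ρ d(ρ)·|μ(ρ)|` for a weight function `d : C → ℕ`. -/
noncomputable def normC (d : C → ℕ) (mu : C → ℕ → ℕ) : ℕ := ∑ᶠ ρ, d ρ * psize (mu ρ)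

/-- Prepend a part `a` to a sequence. -/
def prependPart (a : ℕ) (f : ℕ → ℕ) : ℕ → ℕ := fun i => if i = 0 then a else f (i - 1)

/-- `λ[n]`: agrees with `λ` away from `ι`, and `λ[n](ι) = (n - ‖λ‖, λ₁, λ₂, …)`. -/
noncomputable def shiftFun [DecidableEq C] (d : C → ℕ) (iota : C) (l : C → ℕ → ℕ)
    (n : ℕ) : C → ℕ → ℕ :=
  fun ρ => if ρ = iota then prependPart (n - normC d l) (l iota) else l ρ

/-- `ν_k : C → P`, equal to the one-row partition `(k, 0, 0, …)` at `ι` and `0`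
elsewhere. -/
def nuK [DecidableEq C] (iota : C) (k : ℕ) : C → ℕ → ℕ :=
  fun ρ => if ρ = iota then (fun i => if i = 0 then k else 0) else 0

/-- `α̃`: apply `h̄` to the value at `ι`, keep other values. -/
def tildeF [DecidableEq C] (iota : C) (a : C → ℕ → ℕ) : C → ℕ → ℕ :=
  fun ρ => if ρ = iota then hbar (a iota) else a ρ

/-- A zigzag path `ν ⟶⁻ λ⁽¹⁾ ⟶⁺ μ⁽¹⁾ ⟶⁻ λ⁽²⁾ ⟶⁺ ⋯ ⟶⁺ μ⁽ᵐ⁾ = μ` of partition-valued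
functions with finite support, with `‖μ⁽ˢ⁾‖ = ‖ν‖ + s`.  Here `l ⟨r⟩` is `λ⁽ʳ⁺¹⁾`
and `mus ⟨s⟩` is `μ⁽ˢ⁺¹⁾`. -/
def IsZigzag (d : C → ℕ) (m : ℕ) (nu mu : C → ℕ → ℕ)
    (l mus : Fin m → C → ℕ → ℕ) : Prop :=
  (∀ r : Fin m, ∀ ρ, IsPartition (l r ρ)) ∧
  (∀ s : Fin m, ∀ ρ, IsPartition (mus s ρ)) ∧
  (∀ r : Fin m, (Function.support (l r)).Finite) ∧
  (∀ s : Fin m, (Function.support (mus s)).Finite) ∧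
  (∀ s : Fin m, normC d (mus s) = normC d nu + s.val + 1) ∧
  (∀ hm : 0 < m, FStepDown nu (l ⟨0, hm⟩)) ∧
  (∀ r : Fin m, FStepUp (l r) (mus r)) ∧
  (∀ (r : ℕ) (h1 : r + 1 < m),
      FStepDown (mus ⟨r, Nat.lt_of_succ_lt h1⟩) (l ⟨r + 1, h1⟩)) ∧
  (∀ hm : 0 < m, mus ⟨m - 1, Nat.sub_lt hm Nat.one_pos⟩ = mu) ∧
  (m = 0 → nu = mu)

/-- `Z(ν, μ)`: the set of zigzag paths from `ν` to `μ`. -/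
def Zigzags (d : C → ℕ) (m : ℕ) (nu mu : C → ℕ → ℕ) :
    Set ((Fin m → C → ℕ → ℕ) × (Fin m → C → ℕ → ℕ)) :=
  {p | IsZigzag d m nu mu p.1 p.2}

/-! Along a zigzag path of length `m` the norm grows by exactly `m` and every row moves by at most
`m` boxes. On a path from `ν_{n-m}` to `λ[n]`, the first row at `ι` goes from `n - m` to
`n - ‖λ‖` and the second from `0` to `λ₁`. The subtraction `n - ‖λ‖` truncates, so
`‖λ[n]‖ = max n ‖λ‖`; comparing this with `‖ν_{n-m}‖ + m = (n - m) + m` controls the truncation,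
and the two row bounds then give `‖λ‖ ≤ 2m` and `λ₁ ≤ m`. -/

lemma psize_eq_sum_range {f : ℕ → ℕ} {N : ℕ} (hf : ∀ i, N ≤ i → f i = 0) :
    psize f = ∑ i ∈ Finset.range N, f i :=
  finsum_eq_finsetSum_of_support_subset f fun i hi => by
    by_contra hN
    exact hi (hf i (by simpa using hN))

@[simp]
lemma psize_zero : psize (0 : ℕ → ℕ) = 0 :=
  finsum_zero

lemma psize_prependPart (a : ℕ) {f : ℕ → ℕ} {N : ℕ} (hf : ∀ i, N ≤ i → f i = 0) :
    psize (prependPart a f) = a + psize f := by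
  have hpf : ∀ i, N + 1 ≤ i → prependPart a f i = 0 := fun i hi => by
    simp [prependPart, show i ≠ 0 by omega, hf (i - 1) (by omega)]
  rw [psize_eq_sum_range hf, psize_eq_sum_range hpf, Finset.sum_range_succ', add_comm]
  simp [prependPart]

section normC

variable (d : C → ℕ)

@[simp]
lemma normC_zero : normC d (0 : C → ℕ → ℕ) = 0 := by
  simp [normC]

lemma hasFiniteSupport_normC_summand {μ : C → ℕ → ℕ} (hμ : (Function.support μ).Finite) :
    Function.HasFiniteSupport fun ρ => d ρ * psize (μ ρ) :=
  hμ.subset fun ρ hρ h0 => hρ (by simp [h0])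

lemma normC_update_add [DecidableEq C] {μ : C → ℕ → ℕ} (hμ : (Function.support μ).Finite)
    (ι : C) (g : ℕ → ℕ) :
    normC d (Function.update μ ι g) + d ι * psize (μ ι) = normC d μ + d ι * psize g := by
  have hupd : (Function.support (Function.update μ ι g)).Finite :=
    (hμ.insert ι).subset fun ρ hρ => by
      by_cases h : ρ = ι
      · exact Or.inl h
      · exact Or.inr (by simpa [Function.update_of_ne h] using hρ)
  unfold normC
  rw [← add_finsum_cond_ne ι (hasFiniteSupport_normC_summand d hμ),
    ← add_finsum_cond_ne ι (hasFiniteSupport_normC_summand d hupd)]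
  have hne : (∑ᶠ (ρ) (_ : ρ ≠ ι), d ρ * psize (Function.update μ ι g ρ)) =
      ∑ᶠ (ρ) (_ : ρ ≠ ι), d ρ * psize (μ ρ) :=
    finsum_congr fun ρ => finsum_congr fun hρ => by rw [Function.update_of_ne hρ]
  simp only [Function.update_self, hne]
  ring

lemma normC_nuK [DecidableEq C] {ι : C} (hι : d ι = 1) (k : ℕ) : normC d (nuK ι k) = k := by
  have hnu : nuK ι k = Function.update (0 : C → ℕ → ℕ) ι (prependPart k 0) := by
    funext ρ i
    by_cases hρ : ρ = ι <;> simp [nuK, prependPart, hρ]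
  have h := normC_update_add d (μ := 0) (by simp) ι (prependPart k 0)
  rw [← hnu, psize_prependPart k (f := 0) (N := 0) fun _ _ => rfl] at h
  simpa [hι] using h

lemma normC_shiftFun [DecidableEq C] {ι : C} (hι : d ι = 1) {l : C → ℕ → ℕ}
    (hl : (Function.support l).Finite) {N : ℕ} (hN : ∀ i, N ≤ i → l ι i = 0) (n : ℕ) :
    normC d (shiftFun d ι l n) = (n - normC d l) + normC d l := by
  have hshift : shiftFun d ι l n = Function.update l ι (prependPart (n - normC d l) (l ι)) := by
    funext ρ
    by_cases hρ : ρ = ι <;> simp [shiftFun, hρ]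
  have h := normC_update_add d hl ι (prependPart (n - normC d l) (l ι))
  rw [← hshift, psize_prependPart _ hN, hι] at h
  omega

end normC

namespace IsZigzag

variable {d : C → ℕ} {m : ℕ} {nu mu : C → ℕ → ℕ} {l mus : Fin m → C → ℕ → ℕ}

lemma normC_eq (hz : IsZigzag d m nu mu l mus) : normC d mu = normC d nu + m := by
  obtain ⟨-, -, -, -, hnorm, -, -, -, hlast, hnil⟩ := hz
  rcases Nat.eq_zero_or_pos m with rfl | hm
  · rw [hnil rfl]; rfl
  · rw [← hlast hm, hnorm, Fin.val_mk]
    omega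

lemma mus_apply_le (hz : IsZigzag d m nu mu l mus) (ρ : C) (i : ℕ) :
    ∀ r (hr : r < m), mus ⟨r, hr⟩ ρ i ≤ nu ρ i + (r + 1) ∧ nu ρ i ≤ mus ⟨r, hr⟩ ρ i + (r + 1) := by
  obtain ⟨-, -, -, -, -, hdown₀, hup, hdown, -, -⟩ := hz
  intro r
  induction r with
  | zero =>
    intro hr
    have := hdown₀ hr ρ i
    have := hup ⟨0, hr⟩ ρ i
    omega
  | succ r ih =>
    intro hr
    have := ih (by omega)
    have := hdown r hr ρ i
    have := hup ⟨r + 1, hr⟩ ρ i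
    omega

/-- Each step of a zigzag path moves every row by at most one box. -/
lemma apply_le (hz : IsZigzag d m nu mu l mus) (ρ : C) (i : ℕ) :
    mu ρ i ≤ nu ρ i + m ∧ nu ρ i ≤ mu ρ i + m := by
  have hmus := hz.mus_apply_le ρ i
  obtain ⟨-, -, -, -, -, -, -, -, hlast, hnil⟩ := hz
  rcases Nat.eq_zero_or_pos m with rfl | hm
  · rw [hnil rfl]
    omega
  · simpa only [hlast hm, Nat.sub_add_cancel hm] using hmus (m - 1) (by omega)

end IsZigzag

theorem stmt_6_general [DecidableEq C] (d : C → ℕ) (iota : C)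
    (hiota : d iota = 1) (m n : ℕ) (l : C → ℕ → ℕ)
    (hp : ∀ ρ, IsPartition (l ρ)) (hfin : (Function.support l).Finite)
    (lam mus : Fin m → C → ℕ → ℕ)
    (hz : IsZigzag d m (nuK iota (n - m)) (shiftFun d iota l n) lam mus) :
    normC d l ≤ 2 * m ∧ l iota 0 ≤ m ∧ normC d l + l iota 0 ≤ 3 * m := by
  obtain ⟨N, hN⟩ := (hp iota).2
  have hnorm := hz.normC_eq
  rw [normC_shiftFun d hiota hfin hN, normC_nuK d hiota] at hnorm
  have hrow₀ := hz.apply_le iota 0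
  have hrow₁ := hz.apply_le iota 1
  simp only [shiftFun, nuK, prependPart, if_true, one_ne_zero, if_false, Nat.sub_self]
    at hrow₀ hrow₁
  omega

/-- If for some `n ≥ m` there is a zigzag path from `ν_{n-m}` to `λ[n]`, then
`‖λ‖ ≤ 2m` (i.e. `n - ‖λ‖ ≥ n - 2m`) and `λ₁ ≤ m`; in particular
`‖λ‖ + λ₁ ≤ 3m` (i.e. `3m - ‖λ‖ ≥ λ₁`), so `λ[3m]` is well defined. -/
theorem stmt_6 [DecidableEq C] (d : C → ℕ) (hd : ∀ ρ, 0 < d ρ) (iota : C)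
    (hiota : d iota = 1) (m n : ℕ) (hmn : m ≤ n) (l : C → ℕ → ℕ)
    (hp : ∀ ρ, IsPartition (l ρ)) (hfin : (Function.support l).Finite)
    (lam mus : Fin m → C → ℕ → ℕ)
    (hz : IsZigzag d m (nuK iota (n - m)) (shiftFun d iota l n) lam mus) :
    normC d l ≤ 2 * m ∧ l iota 0 ≤ m ∧ normC d l + l iota 0 ≤ 3 * m :=
  stmt_6_general d iota hiota m n l hp hfin lam mus hz
end

section
/- Fix m ≥ 0 and λ : C → P with ‖λ‖ finite. For every ℓ ≥ 3m, the map sending a zigzag path ({λ^(r)}, {μ^(s)}) from ν_{ℓ−m} to λ[ℓ] to ({λ̃^(r)}, {μ̃^(s)}) (where ~ adds one box to the first row of the value at ι and fixes other values) is a bijection from Z(ν_{ℓ−m}, λ[ℓ]) onto Z(ν_{ℓ+1−m}, λ[ℓ+1]). In particular |Z(ν_{ℓ−m}, λ[ℓ])| = |Z(ν_{ℓ+1−m}, λ[ℓ+1])| for all ℓ ≥ 3m. -/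
variable {C : Type*}

/-!
Adding a box to the first row at `ι` commutes with adding or removing at most one box per row,
raises `‖·‖` by `d ι = 1`, and sends `ν_k` to `ν_{k+1}` and `λ[n]` to `λ[n+1]` (when `‖λ‖ ≤ n`);
so it maps zigzag paths to zigzag paths, injectively. It can be undone on a path whose first row
at `ι` always strictly exceeds the second, since removing the box then leaves a partition. Along
a zigzag from `ν_k`, every step lowers the first row at `ι` by at most one and raises the second
by at most one, so for `ℓ ≥ 3m` the first row stays ahead throughout.
-/

open Function

theorem finsum_add_ite_eq {α M : Type*} [AddCommMonoid M] [DecidableEq α] {f : α → M}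
    (hf : (support f).Finite) (a : α) (c : M) :
    ∑ᶠ x, (f x + if x = a then c else 0) = ∑ᶠ x, f x + c := by
  have hsingle : (support fun x => if x = a then c else 0).Finite :=
    (Set.finite_singleton a).subset fun x hx => by_contra fun h => hx (if_neg h)
  rw [finsum_add_distrib hf hsingle, finsum_eq_single _ a fun x hx => if_neg hx, if_pos rfl]

theorem IsPartition.support_finite {f : ℕ → ℕ} (hf : IsPartition f) : (support f).Finite := by
  obtain ⟨N, hN⟩ := hf.2
  exact (Set.finite_Iio N).subset fun i hi => not_le.1 fun h => hi (hN i h)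

theorem hbar_injective : Injective hbar := by
  intro f g h
  funext i
  have hi := congrFun h i
  by_cases i0 : i = 0
  · subst i0; simpa [hbar] using hi
  · simpa [hbar, i0] using hi

theorem isPartition_hbar_iff {f : ℕ → ℕ} (h : f 1 ≤ f 0) :
    IsPartition (hbar f) ↔ IsPartition f := by
  have hanti : Antitone (hbar f) ↔ Antitone f := by
    refine ⟨fun hf => antitone_nat_of_succ_le fun n => ?_,
      fun hf => antitone_nat_of_succ_le fun n => ?_⟩ <;>
    · have := hf n.le_succ
      rcases n with _ | n <;> simp [hbar] at this ⊢ <;> omega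
  have hzero : (∃ N, ∀ i, N ≤ i → hbar f i = 0) ↔ ∃ N, ∀ i, N ≤ i → f i = 0 := by
    refine ⟨fun ⟨N, hN⟩ => ⟨N + 1, fun i hi => ?_⟩, fun ⟨N, hN⟩ => ⟨N + 1, fun i hi => ?_⟩⟩ <;>
      simpa [hbar, show i ≠ 0 by omega] using hN i (by omega)
  exact and_congr hanti hzero

theorem psize_hbar {f : ℕ → ℕ} (hf : (support f).Finite) : psize (hbar f) = psize f + 1 := by
  have : hbar f = fun i => f i + if i = 0 then 1 else 0 := by
    funext i; by_cases i0 : i = 0 <;> simp [hbar, i0]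
  rw [psize, this, finsum_add_ite_eq hf, psize]

theorem stepUp_hbar_iff {f g : ℕ → ℕ} : StepUp (hbar f) (hbar g) ↔ StepUp f g :=
  forall_congr' fun i => by by_cases i0 : i = 0 <;> simp [hbar, i0]

theorem stepDown_hbar_iff {f g : ℕ → ℕ} : StepDown (hbar f) (hbar g) ↔ StepDown f g :=
  forall_congr' fun i => by by_cases i0 : i = 0 <;> simp [hbar, i0]

section Tilde

variable [DecidableEq C] (iota : C)

theorem tildeF_injective : Injective (tildeF (C := C) iota) := by
  intro a b h
  funext ρ
  have hρ := congrFun h ρ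
  by_cases hι : ρ = iota
  · subst hι; exact hbar_injective (by simpa [tildeF] using hρ)
  · simpa [tildeF, hι] using hρ

theorem forall_tildeF_iff {P : (ℕ → ℕ) → (ℕ → ℕ) → Prop}
    (hP : ∀ f g, P (hbar f) (hbar g) ↔ P f g) (a b : C → ℕ → ℕ) :
    (∀ ρ, P (tildeF iota a ρ) (tildeF iota b ρ)) ↔ ∀ ρ, P (a ρ) (b ρ) :=
  forall_congr' fun ρ => by
    by_cases hι : ρ = iota
    · subst hι; simpa [tildeF] using hP _ _
    · simp [tildeF, hι]

theorem fStepUp_tildeF_iff {a b : C → ℕ → ℕ} :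
    FStepUp (tildeF iota a) (tildeF iota b) ↔ FStepUp a b :=
  forall_tildeF_iff iota (fun _ _ => stepUp_hbar_iff) a b

theorem fStepDown_tildeF_iff {a b : C → ℕ → ℕ} :
    FStepDown (tildeF iota a) (tildeF iota b) ↔ FStepDown a b :=
  forall_tildeF_iff iota (fun _ _ => stepDown_hbar_iff) a b

theorem isPartition_tildeF_iff {a : C → ℕ → ℕ} (h : a iota 1 ≤ a iota 0) :
    (∀ ρ, IsPartition (tildeF iota a ρ)) ↔ ∀ ρ, IsPartition (a ρ) :=
  forall_congr' fun ρ => by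
    by_cases hι : ρ = iota
    · subst hι; simpa [tildeF] using isPartition_hbar_iff h
    · simp [tildeF, hι]

theorem support_tildeF_finite_iff {a : C → ℕ → ℕ} :
    (support (tildeF iota a)).Finite ↔ (support a).Finite := by
  have key : ∀ {b c : C → ℕ → ℕ}, (∀ ρ ≠ iota, b ρ = c ρ) → (support b).Finite →
      (support c).Finite := fun hbc hb =>
    (hb.insert iota).subset fun ρ hρ => by
      by_cases hι : ρ = iota
      · exact Or.inl hι
      · exact Or.inr (by rwa [mem_support, hbc ρ hι])
  exact ⟨key fun ρ hι => if_neg hι, key fun ρ hι => (if_neg hι).symm⟩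

theorem normC_tildeF {d : C → ℕ} (hd : d iota = 1) {a : C → ℕ → ℕ}
    (ha : (support a).Finite) (haι : (support (a iota)).Finite) :
    normC d (tildeF iota a) = normC d a + 1 := by
  have hsupp : (support fun ρ => d ρ * psize (a ρ)).Finite :=
    ha.subset fun ρ hρ h0 => hρ (by simp [h0, psize])
  have : (fun ρ => d ρ * psize (tildeF iota a ρ)) =
      fun ρ => d ρ * psize (a ρ) + if ρ = iota then 1 else 0 := by
    funext ρ
    by_cases hι : ρ = iota
    · subst hι; simp [tildeF, psize_hbar haι, hd]
    · simp [tildeF, hι]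
  rw [normC, this, finsum_add_ite_eq hsupp, normC]

theorem exists_tildeF_eq {a : C → ℕ → ℕ} (h : 0 < a iota 0) : ∃ b, tildeF iota b = a := by
  refine ⟨update a iota (update (a iota) 0 (a iota 0 - 1)), funext fun ρ => ?_⟩
  by_cases hι : ρ = iota
  · subst hι; funext i; by_cases i0 : i = 0 <;> simp [tildeF, hbar, i0]; omega
  · simp [tildeF, hι]

theorem tildeF_row_one_lt_row_zero_iff {a : C → ℕ → ℕ} :
    tildeF iota a iota 1 < tildeF iota a iota 0 ↔ a iota 1 ≤ a iota 0 := by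
  simp [tildeF, hbar]

theorem tildeF_nuK (k : ℕ) : tildeF iota (nuK iota k) = nuK iota (k + 1) := by
  funext ρ i
  by_cases hι : ρ = iota <;> by_cases i0 : i = 0 <;> simp [tildeF, nuK, hbar, hι, i0]

theorem tildeF_shiftFun (d : C → ℕ) (l : C → ℕ → ℕ) {n : ℕ} (hn : normC d l ≤ n) :
    tildeF iota (shiftFun d iota l n) = shiftFun d iota l (n + 1) := by
  funext ρ i
  by_cases hι : ρ = iota <;> by_cases i0 : i = 0 <;>
    simp [tildeF, shiftFun, hbar, prependPart, hι, i0]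
  omega

end Tilde

section Zigzag

variable [DecidableEq C] {d : C → ℕ} {iota : C} {m k : ℕ} {mu : C → ℕ → ℕ}
  {L M : Fin m → C → ℕ → ℕ}

theorem support_nuK_finite (k : ℕ) : (support (nuK iota k)).Finite :=
  (Set.finite_singleton iota).subset fun ρ hρ => by_contra fun h => hρ (by simp_all [nuK])

theorem support_nuK_self_finite (k : ℕ) : (support (nuK iota k iota)).Finite :=
  (Set.finite_singleton 0).subset fun i hi => by_contra fun h => hi (by simp_all [nuK])

theorem eq_zero_of_nuK_eq_shiftFun {l : C → ℕ → ℕ} {n : ℕ}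
    (h : nuK iota k = shiftFun d iota l n) : l = 0 := by
  funext ρ i
  by_cases hι : ρ = iota
  · subst hι; simpa [nuK, shiftFun, prependPart] using (congrFun (congrFun h ρ) (i + 1)).symm
  · simpa [nuK, shiftFun, hι] using (congrFun (congrFun h ρ) i).symm

theorem isZigzag_tildeF_iff (hd : d iota = 1) {nu : C → ℕ → ℕ}
    (hnu : (support nu).Finite) (hnuι : (support (nu iota)).Finite)
    (hL : ∀ r, L r iota 1 ≤ L r iota 0) (hM : ∀ s, M s iota 1 ≤ M s iota 0) :
    IsZigzag d m (tildeF iota nu) (tildeF iota mu) (fun r => tildeF iota (L r))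
        (fun s => tildeF iota (M s)) ↔ IsZigzag d m nu mu L M := by
  have hLp := fun r => isPartition_tildeF_iff iota (hL r)
  have hMp := fun s => isPartition_tildeF_iff iota (hM s)
  simp only [IsZigzag, hLp, hMp, support_tildeF_finite_iff, fStepUp_tildeF_iff,
    fStepDown_tildeF_iff, (tildeF_injective iota).eq_iff]
  refine and_congr_right fun _ => and_congr_right fun hMpart => and_congr_right fun _ =>
    and_congr_right fun hMfin => and_congr (forall_congr' fun s => ?_) Iff.rfl
  rw [normC_tildeF iota hd (hMfin s) (hMpart s iota).support_finite,
    normC_tildeF iota hd hnu hnuι]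
  omega

namespace IsZigzag

theorem first_two_rows_bound (hz : IsZigzag d m (nuK iota k) mu L M) (r : ℕ) (hr : r < m) :
    (k ≤ L ⟨r, hr⟩ iota 0 + (r + 1) ∧ L ⟨r, hr⟩ iota 1 ≤ r) ∧
      (k ≤ M ⟨r, hr⟩ iota 0 + (r + 1) ∧ M ⟨r, hr⟩ iota 1 ≤ r + 1) := by
  obtain ⟨-, -, -, -, -, hdown₀, hup, hdown, -, -⟩ := hz
  have hup0 := hup ⟨r, hr⟩ iota 0
  have hup1 := hup ⟨r, hr⟩ iota 1
  induction r with
  | zero =>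
    have h0 := hdown₀ hr iota 0
    have h1 := hdown₀ hr iota 1
    simp only [nuK, if_true, one_ne_zero, if_false] at h0 h1
    omega
  | succ r ih =>
    obtain ⟨-, ihM0, ihM1⟩ := ih (by omega) (hup _ _ 0) (hup _ _ 1)
    have h0 := hdown r hr iota 0
    have h1 := hdown r hr iota 1
    omega

theorem le_first_row_add (hz : IsZigzag d m (nuK iota k) mu L M) : k ≤ mu iota 0 + m := by
  rcases Nat.eq_zero_or_pos m with rfl | hm
  · obtain ⟨-, -, -, -, -, -, -, -, -, hnil⟩ := hz
    simp [← hnil rfl, nuK]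
  · have h := (hz.first_two_rows_bound (m - 1) (by omega)).2.1
    obtain ⟨-, -, -, -, -, -, -, -, hlast, -⟩ := hz
    rw [hlast hm] at h
    omega

theorem normC_add_le {l : C → ℕ → ℕ} {n : ℕ}
    (hz : IsZigzag d m (nuK iota k) (shiftFun d iota l n) L M) (hk : 2 * m ≤ k) :
    normC d l + (k - 2 * m) ≤ n := by
  have hrow := hz.le_first_row_add
  rcases Nat.eq_zero_or_pos m with rfl | hm
  · obtain ⟨-, -, -, -, -, -, -, -, -, hnil⟩ := hz
    obtain rfl := eq_zero_of_nuK_eq_shiftFun (hnil rfl)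
    simp [normC, psize, shiftFun, prependPart] at hrow ⊢
    omega
  · simp [shiftFun, prependPart] at hrow
    omega

theorem second_row_lt_first_row (hz : IsZigzag d m (nuK iota k) mu L M) (hk : 2 * m < k)
    (r : Fin m) : L r iota 1 < L r iota 0 ∧ M r iota 1 < M r iota 0 := by
  have h := hz.first_two_rows_bound r r.isLt
  simp only [Fin.eta] at h
  have := r.isLt
  omega

end IsZigzag

end Zigzag

theorem stmt_7_general [DecidableEq C] (d : C → ℕ) (iota : C)
    (hiota : d iota = 1) (m : ℕ) (l : C → ℕ → ℕ)
    (el : ℕ) (hel : 3 * m ≤ el) :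
    Set.BijOn
      (fun p : (Fin m → C → ℕ → ℕ) × (Fin m → C → ℕ → ℕ) =>
        ((fun r => tildeF iota (p.1 r)), (fun s => tildeF iota (p.2 s))))
      (Zigzags d m (nuK iota (el - m)) (shiftFun d iota l el))
      (Zigzags d m (nuK iota (el + 1 - m)) (shiftFun d iota l (el + 1))) ∧
    (Zigzags d m (nuK iota (el - m)) (shiftFun d iota l el)).ncard =
      (Zigzags d m (nuK iota (el + 1 - m)) (shiftFun d iota l (el + 1))).ncard := by
  have hnu : nuK iota (el + 1 - m) = tildeF iota (nuK iota (el - m)) := by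
    rw [tildeF_nuK]; congr 1; omega
  have hmu (h : normC d l ≤ el) :
      shiftFun d iota l (el + 1) = tildeF iota (shiftFun d iota l el) :=
    (tildeF_shiftFun iota d l h).symm
  have htransport (L M : Fin m → C → ℕ → ℕ) :=
    isZigzag_tildeF_iff (L := L) (M := M) (mu := shiftFun d iota l el) hiota
      (support_nuK_finite (el - m)) (support_nuK_self_finite (el - m))
  refine (fun hbij : Set.BijOn _ _ _ => ⟨hbij, hbij.ncard_eq⟩) ⟨?_,
    ((tildeF_injective iota).comp_left.prodMap (tildeF_injective iota).comp_left).injOn, ?_⟩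
  · rintro ⟨L, M⟩ hz
    have hnorm := hz.normC_add_le (by omega)
    rw [Zigzags, Set.mem_ofPred_eq, hnu, hmu (by omega)]
    exact (htransport L M (fun r => (hz.1 r iota).1 zero_le_one)
      (fun s => (hz.2.1 s iota).1 zero_le_one)).2 hz
  · rintro ⟨L', M'⟩ hz
    have hnorm := hz.normC_add_le (by omega)
    have hlt := hz.second_row_lt_first_row (by omega)
    choose L hL using fun r => exists_tildeF_eq iota (Nat.zero_lt_of_lt (hlt r).1)
    choose M hM using fun s => exists_tildeF_eq iota (Nat.zero_lt_of_lt (hlt s).2)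
    obtain rfl : L' = fun r => tildeF iota (L r) := funext fun r => (hL r).symm
    obtain rfl : M' = fun s => tildeF iota (M s) := funext fun s => (hM s).symm
    rw [Zigzags, Set.mem_ofPred_eq, hnu, hmu (by omega)] at hz
    exact ⟨(L, M), (htransport L M (fun r => (tildeF_row_one_lt_row_zero_iff iota).1 (hlt r).1)
      (fun s => (tildeF_row_one_lt_row_zero_iff iota).1 (hlt s).2)).1 hz, rfl⟩

/-- For `ℓ ≥ 3m`, applying `~` (adding one box to the first row of the value at
`ι`) to every term of a zigzag path gives a bijection
`Z(ν_{ℓ-m}, λ[ℓ]) → Z(ν_{ℓ+1-m}, λ[ℓ+1])`; in particular these two sets have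
the same cardinality. -/
theorem stmt_7 [DecidableEq C] (d : C → ℕ) (hd : ∀ ρ, 0 < d ρ) (iota : C)
    (hiota : d iota = 1) (m : ℕ) (l : C → ℕ → ℕ)
    (hp : ∀ ρ, IsPartition (l ρ)) (hfin : (Function.support l).Finite)
    (el : ℕ) (hel : 3 * m ≤ el) :
    Set.BijOn
      (fun p : (Fin m → C → ℕ → ℕ) × (Fin m → C → ℕ → ℕ) =>
        ((fun r => tildeF iota (p.1 r)), (fun s => tildeF iota (p.2 s))))
      (Zigzags d m (nuK iota (el - m)) (shiftFun d iota l el))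
      (Zigzags d m (nuK iota (el + 1 - m)) (shiftFun d iota l (el + 1))) ∧
    (Zigzags d m (nuK iota (el - m)) (shiftFun d iota l el)).ncard =
      (Zigzags d m (nuK iota (el + 1 - m)) (shiftFun d iota l (el + 1))).ncard :=
  stmt_7_general d iota hiota m l el hel
end

section
/- In any zigzag path from ν to μ where ν(ι) = (k, 0, 0, …) (and ν vanishes elsewhere), writing λ^(r)(ι) = (α^(r)_1, α^(r)_2, …) and μ^(s)(ι) = (β^(s)_1, β^(s)_2, …), one has α^(r)_1 ≥ k − r, α^(r)_2 ≤ r − 1, β^(s)_1 ≥ k − s, and β^(s)_2 ≤ s, for all 1 ≤ r, s ≤ m. -/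
variable {C : Type*}

/-
Along a zigzag path every row of every partition changes by at most one box per step: a
`⟶⁻` step can only shrink a row, by at most one, and a `⟶⁺` step can only grow it, by at
most one. Before `λ⁽ʳ⁾` there are `r` removal steps and `r - 1` addition steps, so each row of
`λ⁽ʳ⁾` lies between `ν_i - r` and `ν_i + (r - 1)`; one more addition step gives `μ⁽ʳ⁾`. For
`ν(ι) = (k, 0, 0, …)` the first and second rows give the four bounds.
-/

theorem StepUp.le {a b : ℕ → ℕ} (h : StepUp a b) (i : ℕ) : a i ≤ b i := (h i).1

theorem StepUp.le_add_one {a b : ℕ → ℕ} (h : StepUp a b) (i : ℕ) : b i ≤ a i + 1 := (h i).2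

theorem StepDown.le {b a : ℕ → ℕ} (h : StepDown b a) (i : ℕ) : a i ≤ b i := (h i).2

theorem StepDown.le_add_one {b a : ℕ → ℕ} (h : StepDown b a) (i : ℕ) : b i ≤ a i + 1 :=
  Nat.le_add_of_sub_le (h i).1

namespace IsZigzag

variable {d : C → ℕ} {m : ℕ} {nu mu : C → ℕ → ℕ} {l mus : Fin m → C → ℕ → ℕ}

theorem row_bounds_lambda (hz : IsZigzag d m nu mu l mus) (ρ : C) (i : ℕ) (r : Fin m) :
    nu ρ i ≤ l r ρ i + (r.val + 1) ∧ l r ρ i ≤ nu ρ i + r.val := by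
  obtain ⟨-, -, -, -, -, hdown₀, hup, hdown, -, -⟩ := hz
  obtain ⟨r, hr⟩ := r
  induction r with
  | zero =>
    have hstep := hdown₀ hr ρ
    exact ⟨hstep.le_add_one i, (hstep.le i).trans (Nat.le_add_right _ _)⟩
  | succ r ih =>
    obtain ⟨ih_lower, ih_upper⟩ := ih (Nat.lt_of_succ_lt hr)
    have hup_r := hup ⟨r, Nat.lt_of_succ_lt hr⟩ ρ
    have hdown_r := hdown r hr ρ
    have := hup_r.le i
    have := hup_r.le_add_one i
    have := hdown_r.le i
    have := hdown_r.le_add_one i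
    dsimp only at ih_lower ih_upper ⊢
    constructor <;> omega

theorem row_bounds_mu (hz : IsZigzag d m nu mu l mus) (ρ : C) (i : ℕ) (r : Fin m) :
    nu ρ i ≤ mus r ρ i + (r.val + 1) ∧ mus r ρ i ≤ nu ρ i + (r.val + 1) := by
  obtain ⟨hlower, hupper⟩ := hz.row_bounds_lambda ρ i r
  obtain ⟨-, -, -, -, -, -, hup, -, -, -⟩ := hz
  have := (hup r ρ).le i
  have := (hup r ρ).le_add_one i
  constructor <;> omega

end IsZigzag

theorem stmt_8_general [DecidableEq C] (d : C → ℕ) (iota : C)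
    (m k : ℕ) (mu : C → ℕ → ℕ)
    (l mus : Fin m → C → ℕ → ℕ) (hz : IsZigzag d m (nuK iota k) mu l mus) :
    ∀ r : Fin m,
      k ≤ l r iota 0 + (r.val + 1) ∧ l r iota 1 ≤ r.val ∧
      k ≤ mus r iota 0 + (r.val + 1) ∧ mus r iota 1 ≤ r.val + 1 := by
  intro r
  have hν₀ : nuK iota k iota 0 = k := by simp [nuK]
  have hν₁ : nuK iota k iota 1 = 0 := by simp [nuK]
  obtain ⟨hl₀, -⟩ := hz.row_bounds_lambda iota 0 r
  obtain ⟨-, hl₁⟩ := hz.row_bounds_lambda iota 1 r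
  obtain ⟨hμ₀, -⟩ := hz.row_bounds_mu iota 0 r
  obtain ⟨-, hμ₁⟩ := hz.row_bounds_mu iota 1 r
  rw [hν₀] at hl₀ hμ₀
  rw [hν₁, zero_add] at hl₁ hμ₁
  exact ⟨hl₀, hl₁, hμ₀, hμ₁⟩

/-- Bounds along a zigzag path starting from `ν` with `ν(ι) = (k, 0, 0, …)` and
`ν(ρ) = 0` for `ρ ≠ ι`: writing `λ⁽ʳ⁾(ι) = (α⁽ʳ⁾₁, α⁽ʳ⁾₂, …)` and
`μ⁽ˢ⁾(ι) = (β⁽ˢ⁾₁, β⁽ˢ⁾₂, …)`, one has `α⁽ʳ⁾₁ ≥ k - r`, `α⁽ʳ⁾₂ ≤ r - 1`,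
`β⁽ˢ⁾₁ ≥ k - s` and `β⁽ˢ⁾₂ ≤ s` for `1 ≤ r, s ≤ m`.  (Here `l ⟨r-1⟩ = λ⁽ʳ⁾`
and `mus ⟨s-1⟩ = μ⁽ˢ⁾`.) -/
theorem stmt_8 [DecidableEq C] (d : C → ℕ) (hd : ∀ ρ, 0 < d ρ) (iota : C)
    (hiota : d iota = 1) (m k : ℕ) (mu : C → ℕ → ℕ)
    (l mus : Fin m → C → ℕ → ℕ) (hz : IsZigzag d m (nuK iota k) mu l mus) :
    ∀ r : Fin m,
      k ≤ l r iota 0 + (r.val + 1) ∧ l r iota 1 ≤ r.val ∧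
      k ≤ mus r iota 0 + (r.val + 1) ∧ mus r iota 1 ≤ r.val + 1 :=
  stmt_8_general d iota m k mu l mus hz
end

section
/- Fix m, ℓ ≥ 0 and set s = m + min(m, ℓ). For every r ≥ s, with n = ℓ + r, the map of double coset spaces L_{ℓ,r+1}\GL_{n+1}(F_q)/L_{m,n+1−m} induced by the standard inclusion GL_n(F_q) ↪ GL_{n+1}(F_q) is surjective: every x ∈ GL_{n+1}(F_q) can be written as g·y·g' with g ∈ L_{ℓ,r+1}, g' ∈ L_{m,n+1−m}, and y in the image of GL_n(F_q) (i.e., y has last row and column equal to those of the identity). -/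
open Matrix

/-- `Hom_VIC(F^m, F^n)`: pairs `(f, K)` with `f : F^m → F^n` injective linear
and `K ≤ F^n` a complement of the image of `f`. -/
def VICHom (F : Type*) [Field F] [Fintype F] (m n : ℕ) :=
  {p : ((Fin m → F) →ₗ[F] (Fin n → F)) × Submodule F (Fin n → F) //
    Function.Injective p.1 ∧ IsCompl (LinearMap.range p.1) p.2}

/-- The standard inclusion `F^m ↪ F^n`, `(x₁, …, x_m) ↦ (x₁, …, x_m, 0, …, 0)`. -/
def stdInc (F : Type*) [Field F] (m n : ℕ) : (Fin m → F) →ₗ[F] (Fin n → F) where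
  toFun x := fun i => if h : (i : ℕ) < m then x ⟨i, h⟩ else 0
  map_add' x y := by funext i; by_cases h : (i : ℕ) < m <;> simp [h]
  map_smul' c x := by funext i; by_cases h : (i : ℕ) < m <;> simp [h]

/-- The subspace of `F^n` of vectors whose first `m` coordinates are `0`. -/
def stdCompl (F : Type*) [Field F] (m n : ℕ) : Submodule F (Fin n → F) where
  carrier := {v | ∀ i : Fin n, (i : ℕ) < m → v i = 0}
  add_mem' hx hy i hi := by simp [hx i hi, hy i hi]
  zero_mem' i _ := rfl
  smul_mem' c x hx i hi := by simp [hx i hi]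

/-- Membership in `L_{m, n-m} ≤ GL_n(F_q)`: the block-diagonal matrices
`diag(1_m, g₂₂)`, i.e. the matrices whose entries in any position `(i, j)`
with `i < m` or `j < m` agree with the identity matrix. -/
def IsL (m : ℕ) {n : ℕ} {F : Type*} [Field F] (g : Matrix (Fin n) (Fin n) F) : Prop :=
  ∀ i j : Fin n, ((i : ℕ) < m ∨ (j : ℕ) < m) → g i j = if i = j then 1 else 0

/-!
Let `e` be the last standard basis vector. If `g ∈ L_ℓ` and `h ∈ L_m` satisfy `g e = x w`,
`h e = w`, `u g = eᵀ` and `(u x) h = eᵀ`, then `y = g⁻¹ x h` has the last row and column of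
the identity. Such a `g` exists as soon as the row `u` and the column `x w` vanish in the first
`ℓ` coordinates and `u (x w) = 1`, since `L_k` acts transitively on such pairs (a product of two
rank-one updates of the identity does it); likewise for `h`.

The vectors `u, w` come from counting dimensions. Let `E_k` be spanned by the first `k` basis
vectors and `W` be the space of `w` such that `w` and `x w` vanish in the first `m`, resp. `ℓ`,
coordinates, so `dim W ≥ n + 1 - m - ℓ`. If `x W ⊆ E_ℓ + x E_m`, then `x W ∩ E_ℓ = 0` and
`W ∩ E_m = 0` force `dim W ≤ min(m, ℓ)`, which `r ≥ m + min(m, ℓ)` excludes. A functional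
vanishing on `E_ℓ + x E_m` but not at some `x w` with `w ∈ W` then gives `u`.
-/

open Module Submodule

theorem Submodule.finrank_le_of_le_sup_of_disjoint {K V : Type*} [DivisionRing K]
    [AddCommGroup V] [Module K V] [FiniteDimensional K V] {A B C : Submodule K V}
    (hAB : Disjoint A B) (hA : A ≤ B ⊔ C) : finrank K A ≤ finrank K C := by
  have h₁ := finrank_sup_add_finrank_inf_eq A B
  rw [hAB.eq_bot, finrank_bot] at h₁
  have h₂ := finrank_mono (sup_le hA le_sup_left : A ⊔ B ≤ B ⊔ C)
  have h₃ := finrank_add_le_finrank_add_finrank B C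
  omega

theorem LinearEquiv.exists_mem_apply_mem_notMem_sup_map {K V : Type*} [Field K] [AddCommGroup V]
    [Module K V] [FiniteDimensional K V] (T : V ≃ₗ[K] V) {E₁ S₁ E₂ S₂ : Submodule K V}
    (h₁ : IsCompl E₁ S₁) (h₂ : IsCompl E₂ S₂)
    (hdim : finrank K E₁ + finrank K E₂ + min (finrank K E₁) (finrank K E₂) < finrank K V) :
    ∃ w ∈ S₂, T w ∈ S₁ ∧ T w ∉ E₁ ⊔ E₂.map (T : V →ₗ[K] V) := by
  set W := S₂ ⊓ S₁.comap (T : V →ₗ[K] V)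
  have hW : finrank K V ≤ finrank K W + finrank K E₁ + finrank K E₂ := by
    have hS₁ : finrank K (S₁.comap (T : V →ₗ[K] V)) = finrank K S₁ := by
      rw [comap_equiv_eq_map_symm, LinearEquiv.finrank_map_eq]
    have : finrank K ↥(S₂ ⊔ S₁.comap (T : V →ₗ[K] V)) + finrank K W = _ :=
      finrank_sup_add_finrank_inf_eq _ _
    have := finrank_le (S₂ ⊔ S₁.comap (T : V →ₗ[K] V))
    have := finrank_add_eq_of_isCompl h₁
    have := finrank_add_eq_of_isCompl h₂
    omega
  by_contra! hT
  have hTW : W.map (T : V →ₗ[K] V) ≤ E₁ ⊔ E₂.map (T : V →ₗ[K] V) := by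
    rintro _ ⟨w, hw, rfl⟩
    exact hT w hw.1 hw.2
  have hW' : W ≤ E₂ ⊔ E₁.map (T.symm : V →ₗ[K] V) := by
    have := map_mono (f := (T.symm : V →ₗ[K] V)) hTW
    rwa [Submodule.map_sup, ← Submodule.map_comp, ← Submodule.map_comp, T.symm_comp,
      Submodule.map_id, Submodule.map_id, sup_comm] at this
  have hE₂ : finrank K W ≤ finrank K E₂ := by
    have := finrank_le_of_le_sup_of_disjoint
      (h₁.symm.disjoint.mono_left (map_le_iff_le_comap.2 inf_le_right)) hTW
    rwa [LinearEquiv.finrank_map_eq, LinearEquiv.finrank_map_eq] at this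
  have hE₁ : finrank K W ≤ finrank K E₁ := by
    have := finrank_le_of_le_sup_of_disjoint (h₂.symm.disjoint.mono_left inf_le_left) hW'
    rwa [LinearEquiv.finrank_map_eq] at this
  omega

section StdCompl

variable {F : Type*} [Field F] {k N : ℕ}

theorem single_mem_stdCompl {i : Fin N} (hi : k ≤ (i : ℕ)) :
    Pi.single i (1 : F) ∈ stdCompl F k N :=
  fun j hj => Pi.single_eq_of_ne (by rintro rfl; omega) 1

theorem stdInc_apply (x : Fin k → F) (i : Fin N) :
    stdInc F k N x i = if h : (i : ℕ) < k then x ⟨i, h⟩ else 0 :=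
  rfl

theorem single_mem_range_stdInc {j : Fin N} (hj : (j : ℕ) < k) :
    Pi.single j (1 : F) ∈ LinearMap.range (stdInc F k N) := by
  refine ⟨Pi.single ⟨j, hj⟩ 1, funext fun i => ?_⟩
  by_cases hi : (i : ℕ) < k <;> simp [stdInc_apply, hi, Pi.single_apply, Fin.ext_iff]
  omega

theorem finrank_range_stdInc_le : finrank F (LinearMap.range (stdInc F k N)) ≤ k :=
  (LinearMap.finrank_range_le _).trans_eq (finrank_fin_fun F)

theorem isCompl_range_stdInc_stdCompl :
    IsCompl (LinearMap.range (stdInc F k N)) (stdCompl F k N) := by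
  refine ⟨disjoint_def.2 fun v ⟨x, hx⟩ hv => funext fun i => ?_, codisjoint_iff.2 ?_⟩
  · by_cases hi : (i : ℕ) < k
    · exact hv i hi
    · simp [← hx, stdInc_apply, hi]
  · refine eq_top_iff.2 fun v _ => ?_
    let x : Fin k → F := fun j => if h : (j : ℕ) < N then v ⟨j, h⟩ else 0
    refine mem_sup.2 ⟨stdInc F k N x, ⟨x, rfl⟩, v - stdInc F k N x, fun i hi => ?_, by abel⟩
    simp [stdInc_apply, x, hi]

end StdCompl

theorem Matrix.mulVec_single_one_eq_single_one_iff {n R : Type*} [Fintype n] [DecidableEq n]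
    [NonAssocSemiring R] {M : Matrix n n R} {j : n} :
    M *ᵥ Pi.single j 1 = Pi.single j 1 ↔ ∀ i, M i j = if i = j then 1 else 0 := by
  simp only [mulVec_single_one, funext_iff, col_apply, Pi.single_apply]

theorem Matrix.single_one_vecMul_eq_single_one_iff {n R : Type*} [Fintype n] [DecidableEq n]
    [NonAssocSemiring R] {M : Matrix n n R} {i : n} :
    Pi.single i 1 ᵥ* M = Pi.single i 1 ↔ ∀ j, M i j = if i = j then 1 else 0 := by
  simp only [single_one_vecMul, funext_iff, row_apply, Pi.single_apply, eq_comm (a := i)]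

theorem Matrix.one_add_vecMulVec_mulVec {n R : Type*} [Fintype n] [DecidableEq n]
    [CommSemiring R]
    (u v x : n → R) : (1 + vecMulVec u v) *ᵥ x = x + (v ⬝ᵥ x) • u := by
  rw [add_mulVec, one_mulVec, vecMulVec_mulVec, op_smul_eq_smul]

theorem Matrix.vecMul_one_add_vecMulVec {n R : Type*} [Fintype n] [DecidableEq n] [Semiring R]
    (u v x : n → R) : x ᵥ* (1 + vecMulVec u v) = x + (x ⬝ᵥ u) • v := by
  rw [vecMul_add, vecMul_one, vecMul_vecMulVec]

theorem Matrix.det_one_add_vecMulVec {n R : Type*} [Fintype n] [DecidableEq n] [CommRing R]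
    (u v : n → R) : (1 + vecMulVec u v).det = 1 + v ⬝ᵥ u := by
  rw [vecMulVec_eq Unit, det_one_add_replicateCol_mul_replicateRow]

section LSubgroup

variable {F : Type*} [Field F] {N k : ℕ}

theorem isL_iff {M : Matrix (Fin N) (Fin N) F} :
    IsL k M ↔ (∀ j : Fin N, (j : ℕ) < k → M *ᵥ Pi.single j 1 = Pi.single j 1) ∧
      ∀ i : Fin N, (i : ℕ) < k → Pi.single i 1 ᵥ* M = Pi.single i 1 := by
  simp only [mulVec_single_one_eq_single_one_iff, single_one_vecMul_eq_single_one_iff]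
  exact ⟨fun h => ⟨fun j hj i => h i j (.inr hj), fun i hi j => h i j (.inl hi)⟩,
    fun h i j hij => hij.elim (h.2 i · j) (h.1 j · i)⟩

variable (F N k) in
def lSubgroup : Subgroup (GL (Fin N) F) where
  carrier := {g | IsL k (g : Matrix (Fin N) (Fin N) F)}
  mul_mem' {g h} (hg : IsL k _) (hh : IsL k _) := by
    rw [isL_iff] at hg hh
    exact isL_iff.2 ⟨fun j hj => by rw [Units.val_mul, ← mulVec_mulVec, hh.1 j hj, hg.1 j hj],
      fun i hi => by rw [Units.val_mul, ← vecMul_vecMul, hg.2 i hi, hh.2 i hi]⟩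
  one_mem' := isL_iff.2 ⟨fun _ _ => one_mulVec _, fun _ _ => vecMul_one _⟩
  inv_mem' {g} (hg : IsL k _) := by
    rw [isL_iff] at hg
    refine isL_iff.2 ⟨fun j hj => ?_, fun i hi => ?_⟩
    · conv_lhs => rw [← hg.1 j hj, mulVec_mulVec, Units.inv_mul, one_mulVec]
    · conv_lhs => rw [← hg.2 i hi, vecMul_vecMul, Units.mul_inv, vecMul_one]

theorem exists_mem_lSubgroup_coe_eq_one_add_vecMulVec {u v : Fin N → F}
    (hu : u ∈ stdCompl F k N) (hv : v ∈ stdCompl F k N) (huv : 1 + v ⬝ᵥ u ≠ 0) :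
    ∃ g ∈ lSubgroup F N k, (g : Matrix (Fin N) (Fin N) F) = 1 + vecMulVec u v := by
  refine ⟨.mkOfDetNeZero _ (by rwa [det_one_add_vecMulVec]),
    isL_iff.2 ⟨fun j hj => ?_, fun i hi => ?_⟩, rfl⟩
  · rw [GeneralLinearGroup.val_mkOfDetNeZero, one_add_vecMulVec_mulVec, dotProduct_single_one,
      hv j hj, zero_smul, add_zero]
  · rw [GeneralLinearGroup.val_mkOfDetNeZero, vecMul_one_add_vecMulVec, single_one_dotProduct,
      hu i hi, zero_smul, add_zero]

end LSubgroup

section Transitivity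

variable {F : Type*} [Field F] {k n : ℕ}

theorem exists_mem_stdCompl_apply_last_eq_one_dotProduct_ne_zero (hk : k ≤ n)
    {b : Fin (n + 1) → F} (hb : b ∈ stdCompl F k (n + 1)) (hb₀ : b ≠ 0) :
    ∃ c ∈ stdCompl F k (n + 1), c (Fin.last n) = 1 ∧ c ⬝ᵥ b ≠ 0 := by
  have hlast : Pi.single (Fin.last n) (1 : F) ∈ stdCompl F k (n + 1) :=
    single_mem_stdCompl (by simpa)
  by_cases hbl : b (Fin.last n) = 0
  · obtain ⟨p, hp⟩ := Function.ne_iff.1 hb₀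
    have hpl : p ≠ Fin.last n := by rintro rfl; exact hp hbl
    refine ⟨Pi.single (Fin.last n) 1 + Pi.single p 1,
      add_mem hlast (single_mem_stdCompl ?_), by simp [hpl.symm], ?_⟩
    · by_contra! h
      exact hp (hb p h)
    · simpa [add_dotProduct, hbl] using hp
  · exact ⟨Pi.single (Fin.last n) 1, hlast, by simp, by simpa⟩

theorem exists_mem_lSubgroup_mulVec_single_eq_and_vecMul_eq_single (hk : k ≤ n)
    {a b : Fin (n + 1) → F} (ha : a ∈ stdCompl F k (n + 1)) (hb : b ∈ stdCompl F k (n + 1))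
    (hab : a ⬝ᵥ b = 1) :
    ∃ g ∈ lSubgroup F (n + 1) k,
      (g : Matrix (Fin (n + 1)) (Fin (n + 1)) F) *ᵥ Pi.single (Fin.last n) 1 = b ∧
      a ᵥ* (g : Matrix (Fin (n + 1)) (Fin (n + 1)) F) = Pi.single (Fin.last n) 1 := by
  set e : Fin (n + 1) → F := Pi.single (Fin.last n) 1
  have he : e ∈ stdCompl F k (n + 1) := single_mem_stdCompl (by simpa)
  have hee : e ⬝ᵥ e = 1 := by simp [e]
  obtain ⟨c, hc, hc_last, hcb⟩ :=
    exists_mem_stdCompl_apply_last_eq_one_dotProduct_ne_zero hk hb (by rintro rfl; simp at hab)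
  have hce : c ⬝ᵥ e = 1 := by rw [dotProduct_single_one, hc_last]
  -- `1 + (b - e) cᵀ` sends `e` to `b`, then `1 + e (e - a')ᵀ` fixes `e` and sends `a'` to `eᵀ`.
  obtain ⟨g₁, hg₁, hg₁_eq⟩ := exists_mem_lSubgroup_coe_eq_one_add_vecMulVec (sub_mem hb he)
    hc (by rwa [dotProduct_sub, hce, add_sub_cancel])
  have hg₁e : (g₁ : Matrix (Fin (n + 1)) (Fin (n + 1)) F) *ᵥ e = b := by
    rw [hg₁_eq, one_add_vecMulVec_mulVec, hce, one_smul, add_sub_cancel]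
  set a' := a ᵥ* (g₁ : Matrix (Fin (n + 1)) (Fin (n + 1)) F)
  have ha' : a' ∈ stdCompl F k (n + 1) := by
    rw [show a' = a ᵥ* _ from rfl, hg₁_eq, vecMul_one_add_vecMulVec]
    exact add_mem ha (Submodule.smul_mem _ _ hc)
  have ha'e : a' ⬝ᵥ e = 1 := by rw [← dotProduct_mulVec, hg₁e, hab]
  obtain ⟨g₂, hg₂, hg₂_eq⟩ := exists_mem_lSubgroup_coe_eq_one_add_vecMulVec he
    (sub_mem he ha') (by simp [sub_dotProduct, hee, ha'e])
  refine ⟨g₁ * g₂, mul_mem hg₁ hg₂, ?_, ?_⟩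
  · rw [Units.val_mul, ← mulVec_mulVec, hg₂_eq, one_add_vecMulVec_mulVec, sub_dotProduct, hee,
      ha'e, sub_self, zero_smul, add_zero, hg₁e]
  · rw [Units.val_mul, ← vecMul_vecMul, hg₂_eq, vecMul_one_add_vecMulVec, ha'e, one_smul,
      add_sub_cancel]

end Transitivity

theorem exists_dotProduct_mulVec_eq_one {F : Type*} [Field F] {m el N : ℕ} (x : GL (Fin N) F)
    (hN : m + el + min m el < N) :
    ∃ u w : Fin N → F, u ∈ stdCompl F el N ∧ w ∈ stdCompl F m N ∧
      (x : Matrix (Fin N) (Fin N) F) *ᵥ w ∈ stdCompl F el N ∧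
      u ᵥ* (x : Matrix (Fin N) (Fin N) F) ∈ stdCompl F m N ∧
      u ⬝ᵥ ((x : Matrix (Fin N) (Fin N) F) *ᵥ w) = 1 := by
  let T := (GeneralLinearGroup.toLin x).toLinearEquiv
  have hT (v : Fin N → F) : T v = (x : Matrix (Fin N) (Fin N) F) *ᵥ v := rfl
  obtain ⟨w, hw, hTw, hTw_notMem⟩ := LinearEquiv.exists_mem_apply_mem_notMem_sup_map T
    (isCompl_range_stdInc_stdCompl (k := el)) (isCompl_range_stdInc_stdCompl (k := m)) (by
      have := finrank_range_stdInc_le (F := F) (k := el) (N := N)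
      have := finrank_range_stdInc_le (F := F) (k := m) (N := N)
      rw [finrank_fin_fun]
      omega)
  obtain ⟨f, hfw, hf⟩ := exists_dual_map_eq_bot_of_notMem hTw_notMem inferInstance
  rw [← LinearMap.le_ker_iff_map] at hf
  set u := (f (T w))⁻¹ • (dotProductEquiv F (Fin N)).symm f
  have hu (v : Fin N → F) : u ⬝ᵥ v = (f (T w))⁻¹ * f v := by
    rw [smul_dotProduct, ← dotProductEquiv_apply_apply, LinearEquiv.apply_symm_apply,
      smul_eq_mul]
  refine ⟨u, w, fun j hj => ?_, hw, hTw, fun j hj => ?_, ?_⟩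
  · rw [← dotProduct_single_one u j, hu, hf (mem_sup_left (single_mem_range_stdInc hj)),
      mul_zero]
  · have : T (Pi.single j 1) ∈ LinearMap.ker f :=
      hf (mem_sup_right ⟨_, single_mem_range_stdInc hj, rfl⟩)
    rw [← dotProduct_single_one (u ᵥ* _) j, ← dotProduct_mulVec, hu, ← hT,
      LinearMap.mem_ker.1 this, mul_zero]
  · rw [hu, ← hT, inv_mul_cancel₀ hfw]

theorem stmt_14_general (F : Type*) [Field F] (m el r n : ℕ)
    (hr : m + min m el ≤ r) (hn : n = el + r) (x : GL (Fin (n + 1)) F) :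
    ∃ g y g' : GL (Fin (n + 1)) F,
      IsL el (g : Matrix (Fin (n + 1)) (Fin (n + 1)) F) ∧
      IsL m (g' : Matrix (Fin (n + 1)) (Fin (n + 1)) F) ∧
      x = g * y * g' ∧
      (∀ i : Fin (n + 1), (y : Matrix (Fin (n + 1)) (Fin (n + 1)) F) i (Fin.last n)
          = if i = Fin.last n then 1 else 0) ∧
      (∀ j : Fin (n + 1), (y : Matrix (Fin (n + 1)) (Fin (n + 1)) F) (Fin.last n) j
          = if (Fin.last n) = j then 1 else 0) := by
  obtain ⟨u, w, hu, hw, hxw, hux, huxw⟩ :=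
    exists_dotProduct_mulVec_eq_one x (by omega : m + el + min m el < n + 1)
  obtain ⟨g, hg, hge, hug⟩ :=
    exists_mem_lSubgroup_mulVec_single_eq_and_vecMul_eq_single (by omega) hu hxw huxw
  obtain ⟨h, hh, hhe, huxh⟩ := exists_mem_lSubgroup_mulVec_single_eq_and_vecMul_eq_single
    (by omega) hux hw (by rwa [← dotProduct_mulVec])
  have hge' : ((g⁻¹ : GL (Fin (n + 1)) F) : Matrix (Fin (n + 1)) (Fin (n + 1)) F) *ᵥ (x *ᵥ w) =
      Pi.single (Fin.last n) 1 := by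
    rw [← hge, mulVec_mulVec, Units.inv_mul, one_mulVec]
  have hug' : Pi.single (Fin.last n) 1 ᵥ*
      ((g⁻¹ : GL (Fin (n + 1)) F) : Matrix (Fin (n + 1)) (Fin (n + 1)) F) = u := by
    rw [← hug, vecMul_vecMul, Units.mul_inv, vecMul_one]
  refine ⟨g, g⁻¹ * x * h, h⁻¹, hg, inv_mem hh, by group,
    mulVec_single_one_eq_single_one_iff.1 ?_, single_one_vecMul_eq_single_one_iff.1 ?_⟩
  · rw [Units.val_mul, Units.val_mul, ← mulVec_mulVec, ← mulVec_mulVec, hhe, hge']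
  · rw [Units.val_mul, Units.val_mul, ← vecMul_vecMul, ← vecMul_vecMul, hug', huxh]

/-- Fix `m, ℓ ≥ 0` and `s = m + min(m, ℓ)`.  For `r ≥ s` and `n = ℓ + r`, the
map of double coset spaces `L_{ℓ,r}\GL_n/L_{m,n-m} → L_{ℓ,r+1}\GL_{n+1}/L_{m,n+1-m}`
induced by the standard inclusion is surjective: every `x ∈ GL_{n+1}(F_q)` can
be written `x = g·y·g'` with `g ∈ L_{ℓ,r+1}`, `g' ∈ L_{m,n+1-m}` and `y` in
the image of `GL_n(F_q)`, i.e. with last row and last column those of the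
identity matrix. -/
theorem stmt_14 (F : Type*) [Field F] [Fintype F] (m el r n : ℕ)
    (hr : m + min m el ≤ r) (hn : n = el + r) (x : GL (Fin (n + 1)) F) :
    ∃ g y g' : GL (Fin (n + 1)) F,
      IsL el (g : Matrix (Fin (n + 1)) (Fin (n + 1)) F) ∧
      IsL m (g' : Matrix (Fin (n + 1)) (Fin (n + 1)) F) ∧
      x = g * y * g' ∧
      (∀ i : Fin (n + 1), (y : Matrix (Fin (n + 1)) (Fin (n + 1)) F) i (Fin.last n)
          = if i = Fin.last n then 1 else 0) ∧
      (∀ j : Fin (n + 1), (y : Matrix (Fin (n + 1)) (Fin (n + 1)) F) (Fin.last n) j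
          = if (Fin.last n) = j then 1 else 0) :=
  stmt_14_general F m el r n hr hn x
end

section
/- For x ∈ GL_{n+1}(F_q) and m, ℓ with n + 1 > m + ℓ + min(m, ℓ), there exist g_1 ∈ L_{ℓ, n+1−ℓ} and g'_1 ∈ L_{m, n+1−m} such that x_1 = g_1 x g'_1 has zero entries in all positions (i, j) with i > m + ℓ and j ≤ m, and in all positions (i, j) with i ≤ ℓ and j > m + ℓ; moreover any such x_1 has a nonzero entry in some position (i, j) with both i > m + ℓ and j > m + ℓ. -/
open Matrix

/-!
Left multiplication by `diag(1_ℓ, h)` performs row operations among the rows below `ℓ` only.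
Restricted to their first `m` columns, these rows span a space of dimension at most `m`, so a
suitable `h` clears the first `m` columns of all rows from `ℓ + m` on. Doing this once for `x`,
and once for the transpose of `g₁ x` with the roles of `m` and `ℓ` exchanged, gives `g₁` and
`g₁'`; right multiplication by `g₁' ∈ L_m` leaves the first `m` columns unchanged.

If the lower-right block of an invertible `x₁` vanished, then for `ℓ ≤ m` its last
`n + 1 - m - ℓ > ℓ` rows, and for `m < ℓ` its last `n + 1 - m - ℓ > m` columns, would be
linearly independent vectors supported on only `ℓ`, resp. `m`, coordinates.
-/

open Module

section

variable {F : Type*} [Field F]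

theorem Submodule.exists_basis_apply_mem_of_le_add_finrank {V : Type*} [AddCommGroup V]
    [Module F V] [FiniteDimensional F V] (K : Submodule F V) {n c : ℕ}
    (hn : finrank F V = n) (hK : n ≤ c + finrank F K) :
    ∃ b : Basis (Fin n) F V, ∀ i : Fin n, c ≤ (i : ℕ) → b i ∈ K := by
  obtain ⟨C, hC⟩ := K.exists_isCompl
  have hsum := Submodule.finrank_add_eq_of_isCompl hC.symm
  let b₀ := ((finBasis F C).prod (finBasis F K)).map (Submodule.prodEquivOfIsCompl C K hC.symm)
  refine ⟨b₀.reindex (finSumFinEquiv.trans (finCongr (hsum.trans hn))), fun i hi => ?_⟩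
  obtain ⟨t, rfl⟩ : ∃ t : Fin (finrank F K),
      finCongr (hsum.trans hn) (Fin.natAdd _ t) = i :=
    ⟨⟨i - finrank F C, by omega⟩,
      Fin.ext (show finrank F C + (i - finrank F C) = i by omega)⟩
  simp [b₀, Module.Basis.prod_apply]

theorem Matrix.exists_GL_mul_apply_eq_zero {ι : Type*} [Fintype ι] {k : ℕ}
    (B : Matrix (Fin k) ι F) :
    ∃ h : GL (Fin k) F, ∀ (i : Fin k) j, Fintype.card ι ≤ (i : ℕ) →
      ((h : Matrix (Fin k) (Fin k) F) * B) i j = 0 := by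
  have hK : k ≤ Fintype.card ι + finrank F (LinearMap.ker B.vecMulLinear) := by
    have hrank := B.vecMulLinear.finrank_range_add_finrank_ker
    have hrange := (LinearMap.range B.vecMulLinear).finrank_le
    rw [finrank_fintype_fun_eq_card, Fintype.card_fin] at hrank
    rw [finrank_fintype_fun_eq_card] at hrange
    omega
  obtain ⟨b, hb⟩ := (LinearMap.ker B.vecMulLinear).exists_basis_apply_mem_of_le_add_finrank
    (finrank_fin_fun F) hK
  have hunit : IsUnit (Matrix.of fun i => b i) :=
    linearIndependent_rows_iff_isUnit.mp b.linearIndependent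
  exact ⟨hunit.unit, fun i j hi => congrFun (hb i hi) j⟩

def diagOne (a : ℕ) {b : ℕ} (h : Matrix (Fin b) (Fin b) F) :
    Matrix (Fin (a + b)) (Fin (a + b)) F :=
  reindex finSumFinEquiv finSumFinEquiv (fromBlocks 1 0 0 h)

theorem isL_diagOne (a : ℕ) {b : ℕ} (h : Matrix (Fin b) (Fin b) F) : IsL a (diagOne a h) := by
  intro i j hij
  induction i using Fin.addCases <;> induction j using Fin.addCases <;>
    simp_all [diagOne, one_apply, Fin.ext_iff] <;> omega

theorem isUnit_diagOne (a : ℕ) {b : ℕ} {h : Matrix (Fin b) (Fin b) F} (hh : IsUnit h) :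
    IsUnit (diagOne a h) :=
  (isUnit_submatrix_equiv _ _).mpr (isUnit_fromBlocks_zero₂₁.mpr ⟨isUnit_one, hh⟩)

theorem diagOne_mul_apply_natAdd {ι : Type*} (a : ℕ) {b : ℕ} (h : Matrix (Fin b) (Fin b) F)
    (A : Matrix (Fin (a + b)) ι F) (r : Fin b) (j : ι) :
    (diagOne a h * A) (Fin.natAdd a r) j = (h * A.submatrix (Fin.natAdd a) id) r j := by
  simp [diagOne, mul_apply, Fin.sum_univ_add]

theorem exists_isL_mul_apply_eq_zero {ι : Type*} [Fintype ι] {N : ℕ} (a : ℕ) (hN : a ≤ N)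
    (A : Matrix (Fin N) ι F) :
    ∃ P : GL (Fin N) F, IsL a (P : Matrix (Fin N) (Fin N) F) ∧
      ∀ (i : Fin N) j, a + Fintype.card ι ≤ (i : ℕ) →
        ((P : Matrix (Fin N) (Fin N) F) * A) i j = 0 := by
  obtain ⟨k, rfl⟩ := Nat.exists_eq_add_of_le hN
  obtain ⟨h, hh⟩ := exists_GL_mul_apply_eq_zero (A.submatrix (Fin.natAdd a) id)
  refine ⟨(isUnit_diagOne a h.isUnit).unit, ?_, fun i j hi => ?_⟩ <;> rw [IsUnit.unit_spec]
  · exact isL_diagOne a _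
  obtain ⟨r, rfl⟩ : ∃ r : Fin k, Fin.natAdd a r = i :=
    ⟨⟨i - a, by omega⟩, Fin.ext (show a + (i - a) = i by omega)⟩
  rw [diagOne_mul_apply_natAdd]
  exact hh r j (by rw [Fin.val_natAdd] at hi; omega)

theorem IsL.transpose {m n : ℕ} {g : Matrix (Fin n) (Fin n) F} (hg : IsL m g) : IsL m gᵀ := by
  intro i j hij
  rw [transpose_apply, hg j i hij.symm]
  simp only [eq_comm]

theorem IsL.mul_apply_of_lt {ι : Type*} {m n : ℕ} {g : Matrix (Fin n) (Fin n) F} (hg : IsL m g)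
    (M : Matrix ι (Fin n) F) (i : ι) {j : Fin n} (hj : (j : ℕ) < m) :
    (M * g) i j = M i j := by
  simp [mul_apply, hg _ j (Or.inr hj)]

theorem Matrix.card_le_card_of_isUnit_of_apply_eq_zero {n ι κ : Type*} [Fintype n]
    [DecidableEq n] [Fintype ι] [Fintype κ] {M : Matrix n n F} (hM : IsUnit M) {r : ι → n}
    (hr : Function.Injective r) (c : κ → n) (h : ∀ i j, j ∉ Set.range c → M (r i) j = 0) :
    Fintype.card ι ≤ Fintype.card κ := by
  have hli : LinearIndependent F (fun i => M (r i)) :=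
    (linearIndependent_rows_iff_isUnit.mpr hM).comp r hr
  have hli_restrict : LinearIndependent F (fun i => M (r i) ∘ c) := by
    rw [Fintype.linearIndependent_iff] at hli ⊢
    refine fun g hg => hli g (funext fun j => ?_)
    by_cases hj : j ∈ Set.range c
    · obtain ⟨k, rfl⟩ := hj
      simpa using congrFun hg k
    · simp [h _ j hj]
  simpa using hli_restrict.fintype_card_le_finrank

theorem Matrix.not_isUnit_of_apply_eq_zero {N a b : ℕ} (hN : a + b + b < N)
    (M : Matrix (Fin N) (Fin N) F)
    (h : ∀ i j : Fin N, a + b ≤ (i : ℕ) → ((j : ℕ) < a ∨ a + b ≤ (j : ℕ)) →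
      M i j = 0) :
    ¬ IsUnit M := by
  intro hM
  have := card_le_card_of_isUnit_of_apply_eq_zero hM
    (r := fun i : Fin (b + 1) => ⟨a + b + i, by omega⟩)
    (fun i i' hii' => Fin.ext (by simpa using hii'))
    (fun k : Fin b => ⟨a + k, by omega⟩) fun i j hj => h _ j (Nat.le_add_right _ _) <| by
      by_contra! hj'
      exact hj ⟨⟨j - a, by omega⟩, Fin.ext (show a + (j - a) = j by omega)⟩
  simp at this

end

theorem stmt_15_general (F : Type*) [Field F] (m el n : ℕ)
    (hn : m + el + min m el < n + 1) (x : GL (Fin (n + 1)) F) :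
    (∃ g₁ g₁' : GL (Fin (n + 1)) F,
      IsL el (g₁ : Matrix (Fin (n + 1)) (Fin (n + 1)) F) ∧
      IsL m (g₁' : Matrix (Fin (n + 1)) (Fin (n + 1)) F) ∧
      (∀ i j : Fin (n + 1),
        (m + el ≤ (i : ℕ) ∧ (j : ℕ) < m) ∨ ((i : ℕ) < el ∧ m + el ≤ (j : ℕ)) →
        ((g₁ : Matrix (Fin (n + 1)) (Fin (n + 1)) F) *
          (x : Matrix (Fin (n + 1)) (Fin (n + 1)) F) *
          (g₁' : Matrix (Fin (n + 1)) (Fin (n + 1)) F)) i j = 0)) ∧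
    (∀ y : GL (Fin (n + 1)) F,
      (∀ i j : Fin (n + 1),
        (m + el ≤ (i : ℕ) ∧ (j : ℕ) < m) ∨ ((i : ℕ) < el ∧ m + el ≤ (j : ℕ)) →
        (y : Matrix (Fin (n + 1)) (Fin (n + 1)) F) i j = 0) →
      ∃ i j : Fin (n + 1), m + el ≤ (i : ℕ) ∧ m + el ≤ (j : ℕ) ∧
        (y : Matrix (Fin (n + 1)) (Fin (n + 1)) F) i j ≠ 0) := by
  refine ⟨?_, fun y hy => ?_⟩
  · obtain ⟨g₁, hg₁, hx₁⟩ := exists_isL_mul_apply_eq_zero el (by omega)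
      (x.val.submatrix id (Fin.castLE (by omega : m ≤ n + 1)))
    obtain ⟨g, hg, hx₂⟩ := exists_isL_mul_apply_eq_zero m (by omega)
      ((g₁.val * x.val)ᵀ.submatrix id (Fin.castLE (by omega : el ≤ n + 1)))
    refine ⟨g₁, ((isUnit_transpose _).mpr g.isUnit).unit, hg₁, ?_, ?_⟩ <;>
      rw [IsUnit.unit_spec]
    · exact hg.transpose
    rintro i j (⟨hi, hj⟩ | ⟨hi, hj⟩)
    · rw [hg.transpose.mul_apply_of_lt _ i hj]
      exact hx₁ i ⟨j, hj⟩ (by rw [Fintype.card_fin]; omega)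
    · rw [← transpose_apply (_ * _), transpose_mul, transpose_transpose]
      exact hx₂ j ⟨i, hi⟩ (by rw [Fintype.card_fin]; omega)
  · by_contra! hblock
    rcases le_total el m with h | h
    · refine not_isUnit_of_apply_eq_zero (a := m) (b := el) (by omega) _ ?_ y.isUnit
      exact fun i j hi hj => hj.elim (fun hj => hy i j (Or.inl ⟨hi, hj⟩)) (hblock i j hi)
    · refine not_isUnit_of_apply_eq_zero (a := el) (b := m) (by omega) _ ?_
        ((isUnit_transpose _).mpr y.isUnit)
      exact fun i j hi hj => hj.elim (fun hj => hy j i (Or.inr ⟨hj, by omega⟩))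
        (fun hj => hblock j i (by omega) (by omega))

/-- For `x ∈ GL_{n+1}(F_q)` and `m, ℓ` with `n + 1 > m + ℓ + min(m, ℓ)`:
there are `g₁ ∈ L_{ℓ, n+1-ℓ}` and `g₁' ∈ L_{m, n+1-m}` such that
`x₁ = g₁ x g₁'` vanishes in all positions `(i, j)` with `i > m + ℓ` and
`j ≤ m`, and in all positions with `i ≤ ℓ` and `j > m + ℓ` (positions
`0`-indexed below); moreover any such `x₁` has a nonzero entry in some
position `(i, j)` with both `i > m + ℓ` and `j > m + ℓ`. -/
theorem stmt_15 (F : Type*) [Field F] [Fintype F] (m el n : ℕ)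
    (hn : m + el + min m el < n + 1) (x : GL (Fin (n + 1)) F) :
    (∃ g₁ g₁' : GL (Fin (n + 1)) F,
      IsL el (g₁ : Matrix (Fin (n + 1)) (Fin (n + 1)) F) ∧
      IsL m (g₁' : Matrix (Fin (n + 1)) (Fin (n + 1)) F) ∧
      (∀ i j : Fin (n + 1),
        (m + el ≤ (i : ℕ) ∧ (j : ℕ) < m) ∨ ((i : ℕ) < el ∧ m + el ≤ (j : ℕ)) →
        ((g₁ : Matrix (Fin (n + 1)) (Fin (n + 1)) F) *
          (x : Matrix (Fin (n + 1)) (Fin (n + 1)) F) *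
          (g₁' : Matrix (Fin (n + 1)) (Fin (n + 1)) F)) i j = 0)) ∧
    (∀ y : GL (Fin (n + 1)) F,
      (∀ i j : Fin (n + 1),
        (m + el ≤ (i : ℕ) ∧ (j : ℕ) < m) ∨ ((i : ℕ) < el ∧ m + el ≤ (j : ℕ)) →
        (y : Matrix (Fin (n + 1)) (Fin (n + 1)) F) i j = 0) →
      ∃ i j : Fin (n + 1), m + el ≤ (i : ℕ) ∧ m + el ≤ (j : ℕ) ∧
        (y : Matrix (Fin (n + 1)) (Fin (n + 1)) F) i j ≠ 0) :=
  stmt_15_general F m el n hn x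
end
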